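/- Let G be a finite nonempty set and C a set with more elements than G. Then S* = {δ : G → C | for every g ∈ G there is h ≠ g with δ h = δ g} is the greatest colour-permutation-invariant solvable set of worlds: S* is colour-permutation-invariant and solvable, and every colour-permutation-invariant solvable S ⊆ (G → C) satisfies S ⊆ S*. (This is the greatest fixpoint interpreting Santa's announcement solvable, and it shows solvable and solvable′ have the same information content.) -/

import Mathlib

/-!
Relabelling colours by `ι : C ≃ C` and agents by `π : G ≃ G` acts on worlds by
`δ ↦ ι ∘ δ ∘ π`, and the bell dynamics is equivariant under every such relabelling that
preserves `S`.

In `S*`, an agent `g` whose colour is worn by `m` agents knows it at stage `m - 2`, by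
induction on `m`: if `δ ~_g δ'` with `δ' g ≠ δ g`, pick `h ≠ g` of `g`'s colour. In `δ'` the
colour of `h` is worn by `m - 1` agents (`g` has left it), so `h` knows it one stage earlier,
and the knower sets of `δ` and `δ'` agree there. Swapping `g` and `h` fixes `δ` and carries
`δ'` to a world that `h` cannot tell apart from `δ` at that stage, yet in which `h` wears
`δ' g`, a contradiction.

Conversely, if `g` wears a unique colour in `δ ∈ S`, swap that colour with a colour nobody
wears (one exists since `|C| > |G|`). The new world lies in `S`, differs from `δ` only at `g`,
and by colour equivariance has the same knower sets as `δ` at every stage, so `g` never knows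
its colour.
-/

/-- Worlds `δ, δ'` are `g`-similar: they agree on all agents other than `g`. -/
def gSim {G C : Type*} (g : G) (δ δ' : G → C) : Prop := ∀ h, h ≠ g → δ h = δ' h

/-- The iterated bell dynamics: `bellSim S n g δ δ'` is the stage-`n` indistinguishability
relation `δ ~_g^n δ'` on `S`. At stage `n+1` the relation is refined by the exact set of
knowers (the fine bell dynamics). -/
def bellSim {G C : Type*} (S : Set (G → C)) : ℕ → G → (G → C) → (G → C) → Prop
  | 0 => fun g δ δ' => δ ∈ S ∧ δ' ∈ S ∧ gSim g δ δ'
  | n + 1 => fun g δ δ' => bellSim S n g δ δ' ∧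
      {x | ∀ ε, bellSim S n x δ ε → ε x = δ x} =
        {x | ∀ ε, bellSim S n x δ' ε → ε x = δ' x}

/-- The knower set `K_n(δ)`: agents who know their own colour at `δ` at stage `n`. -/
def knows {G C : Type*} (S : Set (G → C)) (n : ℕ) (δ : G → C) : Set G :=
  {g | ∀ δ', bellSim S n g δ δ' → δ' g = δ g}

/-- `S` is invariant under permutations of the colours. -/
def permInv {G C : Type*} (S : Set (G → C)) : Prop :=
  ∀ ι : C ≃ C, ∀ δ ∈ S, (⇑ι ∘ δ) ∈ S

/-- `S` is solvable: every agent eventually knows its colour at every world of `S`. -/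
def solvable {G C : Type*} (S : Set (G → C)) : Prop :=
  ∀ δ ∈ S, ∀ g : G, ∃ n : ℕ, g ∈ knows S n δ

/-- `S*`: the worlds without unique colours (every worn colour is worn at least twice). -/
def Sstar (G C : Type*) : Set (G → C) := {δ | ∀ g, ∃ h, h ≠ g ∧ δ h = δ g}

section Bell

variable {G C : Type*}

section BellSim

variable {S : Set (G → C)} {n : ℕ} {g : G} {δ δ' : G → C}

theorem bellSim_zero_iff :
    bellSim S 0 g δ δ' ↔ δ ∈ S ∧ δ' ∈ S ∧ gSim g δ δ' :=
  Iff.rfl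

theorem bellSim_succ_iff :
    bellSim S (n + 1) g δ δ' ↔ bellSim S n g δ δ' ∧ knows S n δ = knows S n δ' :=
  Iff.rfl

theorem bellSim.mono {j : ℕ} (hjn : j ≤ n) (h : bellSim S n g δ δ') : bellSim S j g δ δ' := by
  induction hjn with
  | refl => exact h
  | step _ ih => exact ih h.1

theorem bellSim.zero (h : bellSim S n g δ δ') : bellSim S 0 g δ δ' :=
  h.mono n.zero_le

end BellSim

section Relabel

variable {S : Set (G → C)} (ι : C ≃ C) (π : G ≃ G)

theorem gSim_relabel_iff {g : G} {δ δ' : G → C} :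
    gSim g (ι ∘ δ ∘ π) (ι ∘ δ' ∘ π) ↔ gSim (π g) δ δ' := by
  simp only [gSim, Function.comp_apply, ι.apply_eq_iff_eq]
  exact π.forall_congr fun _ => by simp

theorem relabel_surjective : Function.Surjective fun δ : G → C => ι ∘ δ ∘ π :=
  fun ε => ⟨ι.symm ∘ ε ∘ π.symm, by ext; simp⟩

theorem knows_relabel_of_bellSim_iff {n : ℕ}
    (hb : ∀ g δ δ', bellSim S n g (ι ∘ δ ∘ π) (ι ∘ δ' ∘ π) ↔ bellSim S n (π g) δ δ')
    (δ : G → C) : knows S n (ι ∘ δ ∘ π) = π ⁻¹' knows S n δ := by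
  ext x
  simp only [knows, Set.mem_ofPred_eq, Set.mem_preimage]
  rw [(relabel_surjective ι π).forall]
  simp only [hb, Function.comp_apply, ι.apply_eq_iff_eq]

theorem bellSim_relabel_iff (hS : ∀ δ, ι ∘ δ ∘ π ∈ S ↔ δ ∈ S) (n : ℕ) (g : G) (δ δ' : G → C) :
    bellSim S n g (ι ∘ δ ∘ π) (ι ∘ δ' ∘ π) ↔ bellSim S n (π g) δ δ' := by
  induction n generalizing g δ δ' with
  | zero => rw [bellSim_zero_iff, bellSim_zero_iff, hS, hS, gSim_relabel_iff]
  | succ n ih =>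
    rw [bellSim_succ_iff, bellSim_succ_iff, ih, knows_relabel_of_bellSim_iff ι π ih,
      knows_relabel_of_bellSim_iff ι π ih, Set.preimage_eq_preimage π.surjective]

theorem knows_relabel (hS : ∀ δ, ι ∘ δ ∘ π ∈ S ↔ δ ∈ S) (n : ℕ) (δ : G → C) :
    knows S n (ι ∘ δ ∘ π) = π ⁻¹' knows S n δ :=
  knows_relabel_of_bellSim_iff ι π (bellSim_relabel_iff ι π hS n) δ

end Relabel

section Sstar

variable {n : ℕ} {g h : G} {δ δ' : G → C}

theorem relabel_mem_Sstar_iff (ι : C ≃ C) (π : G ≃ G) :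
    ι ∘ δ ∘ π ∈ Sstar G C ↔ δ ∈ Sstar G C := by
  simp only [Sstar, Set.mem_ofPred_eq, Function.comp_apply, ι.apply_eq_iff_eq]
  exact π.forall_congr fun _ => π.exists_congr fun _ => by simp

theorem permInv_Sstar : permInv (Sstar G C) :=
  fun ι _ hδ => (relabel_mem_Sstar_iff ι (Equiv.refl G)).2 hδ

theorem one_lt_ncard_fiber_of_mem_Sstar [Finite G] (hδ : δ ∈ Sstar G C) (g : G) :
    1 < {x | δ x = δ g}.ncard := by
  obtain ⟨h, hhg, hh⟩ := hδ g
  exact (Set.one_lt_ncard_iff).2 ⟨h, g, hh, rfl, hhg⟩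

theorem fiber_eq_diff_of_gSim (hsim : gSim g δ δ') (hne : δ' g ≠ δ g) :
    {x | δ' x = δ g} = {x | δ x = δ g} \ {g} := by
  ext x
  by_cases hx : x = g
  · subst hx
    simp [hne]
  · simp [hx, hsim x hx]

theorem bellSim_Sstar_swap [DecidableEq G] (hgh : δ h = δ g)
    (hb : bellSim (Sstar G C) n g δ δ') :
    bellSim (Sstar G C) n h δ (δ' ∘ Equiv.swap g h) := by
  have hδ : δ ∘ Equiv.swap g h = δ := by
    ext x
    rw [Function.comp_apply, Equiv.swap_apply_def]
    split_ifs <;> simp_all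
  have := (bellSim_relabel_iff (Equiv.refl C) (Equiv.swap g h)
    (fun _ => relabel_mem_Sstar_iff _ _) n h δ δ').2 (by simpa using hb)
  simpa [hδ] using this

theorem mem_knows_Sstar [Finite G] (hδ : δ ∈ Sstar G C) (g : G) :
    g ∈ knows (Sstar G C) ({x | δ x = δ g}.ncard - 2) δ := by
  classical
  induction hm : {x | δ x = δ g}.ncard using Nat.strong_induction_on generalizing δ g with
  | _ m ih =>
  intro δ' hb
  by_contra hne
  obtain ⟨-, hδ', hsim⟩ := hb.zero
  obtain ⟨h, hhg, hh⟩ := hδ g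
  have hδ'h : δ' h = δ g := (hsim h hhg).symm.trans hh
  have hfiber : {x | δ' x = δ' h}.ncard = m - 1 := by
    rw [hδ'h, fiber_eq_diff_of_gSim hsim hne,
      Set.ncard_sdiff_singleton_of_mem (show g ∈ {x | δ x = δ g} from rfl), hm]
  obtain ⟨k, hk⟩ : ∃ k, m - 2 = k + 1 := ⟨m - 3, by
    have := one_lt_ncard_fiber_of_mem_Sstar hδ' h
    omega⟩
  rw [hk, bellSim_succ_iff] at hb
  have hh_knows : h ∈ knows (Sstar G C) k δ := by
    rw [hb.2]
    simpa [show m - 1 - 2 = k by omega] using ih (m - 1) (by omega) hδ' h hfiber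
  exact hne (by simpa [hh] using hh_knows _ (bellSim_Sstar_swap hh hb.1))

end Sstar

section Maximal

variable {S : Set (G → C)} {g : G} {δ : G → C}

theorem permInv.comp_mem_iff (hS : permInv S) (ι : C ≃ C) : ι ∘ δ ∈ S ↔ δ ∈ S :=
  ⟨fun h => by simpa [Function.comp_def] using hS ι.symm _ h, hS ι δ⟩

theorem bellSim_comp_of_gSim (hS : permInv S) {ι : C ≃ C} (hδ : δ ∈ S)
    (hsim : gSim g δ (ι ∘ δ)) (n : ℕ) : bellSim S n g δ (ι ∘ δ) := by
  induction n with
  | zero => exact ⟨hδ, hS ι δ hδ, hsim⟩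
  | succ n ih =>
    exact ⟨ih, (knows_relabel ι (Equiv.refl G) (fun _ => hS.comp_mem_iff ι) n δ).symm⟩

theorem notMem_knows_of_unique (hS : permInv S) (hδ : δ ∈ S) {c : C} (hc : c ∉ Set.range δ)
    (huniq : ∀ h, h ≠ g → δ h ≠ δ g) (n : ℕ) : g ∉ knows S n δ := by
  classical
  have hsim : gSim g δ (Equiv.swap (δ g) c ∘ δ) := fun h hh =>
    (Equiv.swap_apply_of_ne_of_ne (huniq h hh) fun e => hc ⟨h, e⟩).symm
  intro hg
  have := hg _ (bellSim_comp_of_gSim hS hδ hsim n)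
  simp only [Function.comp_apply, Equiv.swap_apply_left] at this
  exact hc ⟨g, this.symm⟩

theorem exists_notMem_range [Fintype G] (hcard : (Fintype.card G : Cardinal) < Cardinal.mk C)
    (δ : G → C) : ∃ c, c ∉ Set.range δ := by
  by_contra! hsurj
  have : Finite C := Finite.of_surjective δ hsurj
  have := Fintype.ofFinite C
  rw [Cardinal.mk_fintype, Nat.cast_lt] at hcard
  exact (Fintype.card_le_of_surjective δ hsurj).not_gt hcard

end Maximal

end Bell

theorem stmt_5_general {G C : Type*} [Fintype G]
    (hcard : (Fintype.card G : Cardinal) < Cardinal.mk C) :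
    permInv (Sstar G C) ∧ solvable (Sstar G C) ∧
      ∀ S : Set (G → C), permInv S → solvable S → S ⊆ Sstar G C := by
  refine ⟨permInv_Sstar, fun δ hδ g => ⟨_, mem_knows_Sstar hδ g⟩, fun S hS hsol δ hδ g => ?_⟩
  by_contra! huniq
  obtain ⟨c, hc⟩ := exists_notMem_range hcard δ
  obtain ⟨n, hn⟩ := hsol δ hδ g
  exact notMem_knows_of_unique hS hδ hc huniq n hn

/-- `S*` is the greatest colour-permutation-invariant solvable set of worlds. -/
theorem stmt_5 {G C : Type*} [Fintype G] [Nonempty G]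
    (hcard : (Fintype.card G : Cardinal) < Cardinal.mk C) :
    permInv (Sstar G C) ∧ solvable (Sstar G C) ∧
      ∀ S : Set (G → C), permInv S → solvable S → S ⊆ Sstar G C :=
  stmt_5_general hcard
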